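/- In a 4-model, the 'associativity defect' vanishes at the level of composed corrections: P_{(21)}P_{(41)}P_{(42)} = 0 and P_{(21)}P_{(31)}P_{(32)} = 0 and P_{(32)}P_{(42)}P_{(43)} = 0, where the P_{(ij)} are the model projections for indices 1 ≤ j ≤ i ≤ 4. -/

import Mathlib

open ContinuousLinearMap

/-- The orthogonal projection onto the closure of a submodule, as an operator `H →L[ℂ] H`. -/
noncomputable def orthProjCl {H : Type*} [NormedAddCommGroup H] [InnerProductSpace ℂ H]
    [CompleteSpace H] (S : Submodule ℂ H) : H →L[ℂ] H :=
  haveI : CompleteSpace S.topologicalClosure :=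
    S.isClosed_topologicalClosure.completeSpace_coe
  S.topologicalClosure.subtypeL ∘L Submodule.orthogonalProjectionOnto S.topologicalClosure

section

variable {ι : Type*} [LinearOrder ι]
  {H : Type*} [NormedAddCommGroup H] [InnerProductSpace ℂ H] [CompleteSpace H]
  {E : ι → Type*} [∀ r, NormedAddCommGroup (E r)] [∀ r, InnerProductSpace ℂ (E r)]
  [∀ r, CompleteSpace (E r)]

/-- `q_r = W_r p_r W_r*` -/
noncomputable def qmap (W : ∀ r, E r →L[ℂ] H) (p : ∀ r, E r →L[ℂ] E r) (r : ι) : H →L[ℂ] H :=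
  W r ∘L p r ∘L adjoint (W r)

/-- The model projection `P_{(ij)} = P_{π_i∨…∨π_j}(I − q_{j+})(I − q_{i−})`. -/
noncomputable def Pmodel (W : ∀ r, E r →L[ℂ] H) (pPlus pMinus : ∀ r, E r →L[ℂ] E r)
    (i j : ι) : H →L[ℂ] H :=
  orthProjCl (⨆ r ∈ Set.Icc j i, LinearMap.range (W r).toLinearMap) ∘L
    (1 - qmap W pPlus j) ∘L (1 - qmap W pMinus i)

end

/- ### Auxiliary lemmas -/

lemma massoc' {R : Type*} [Ring R] {a b c : R} (h : a * b = c) (x : R) :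
    a * (b * x) = c * x := by rw [← mul_assoc, h]

lemma massoc0' {R : Type*} [Ring R] {a b : R} (h : a * b = 0) (x : R) :
    a * (b * x) = 0 := by rw [← mul_assoc, h, zero_mul]

/-- The purely algebraic core of the argument. -/
lemma ringkey' {R : Type*} [Ring R] (P1 P2 P3 ql rk sk ri : R)
    (h1 : ri*P3 = ri) (h3 : ri*ri = ri) (h4 : sk*sk = sk) (h5 : ql*ql = ql)
    (h6 : ri*sk = 0) (h7 : rk*ql = 0) (h8 : ql*P3 = ql*sk + ql*rk)
    (h9 : P2*P3 = P3) (h10 : P2*ql = ql) (h11 : P1*ql = ql) (h12 : P1*rk = rk)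
    (h13 : rk*P3 = rk) (h14 : P1*P3 = sk + rk) :
    (P1 * ((1-ql)*(1-rk))) * ((P2 * ((1-ql)*(1-ri))) * (P3 * ((1-sk)*(1-ri)))) = 0 := by
  simp only [mul_sub, sub_mul, mul_add, add_mul, mul_one, one_mul, mul_assoc]
  simp only [massoc' h1, massoc' h3, massoc' h4, massoc' h5, massoc0' h6, massoc0' h7,
    massoc' h8, massoc' h9, massoc' h10, massoc' h11, massoc' h12, massoc' h13, massoc' h14,
    h1, h3, h4, h5, h6, h7, h8, h9, h10, h11, h12, h13, h14,
    mul_zero, zero_mul, mul_add, add_mul, mul_sub, sub_mul, mul_one, one_mul, mul_assoc]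
  abel

section AuxProj

variable {H : Type*} [NormedAddCommGroup H] [InnerProductSpace ℂ H] [CompleteSpace H]

lemma orthProjCl_apply_mem (S : Submodule ℂ H) (x : H) :
    orthProjCl S x ∈ S.topologicalClosure := by
  haveI : CompleteSpace S.topologicalClosure := S.isClosed_topologicalClosure.completeSpace_coe
  exact (Submodule.orthogonalProjectionOnto S.topologicalClosure x).2

lemma orthProjCl_fix {S : Submodule ℂ H} {x : H} (hx : x ∈ S.topologicalClosure) :
    orthProjCl S x = x := by
  haveI : CompleteSpace S.topologicalClosure := S.isClosed_topologicalClosure.completeSpace_coe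
  exact Submodule.starProjection_eq_self_iff.2 hx

lemma orthProjCl_eq_of {S : Submodule ℂ H} {x y : H} (hy : y ∈ S.topologicalClosure)
    (ho : x - y ∈ (S.topologicalClosure)ᗮ) : orthProjCl S x = y := by
  haveI : CompleteSpace S.topologicalClosure := S.isClosed_topologicalClosure.completeSpace_coe
  exact Submodule.eq_starProjection_of_mem_orthogonal hy ho

lemma orthProjCl_adjoint (S : Submodule ℂ H) :
    ContinuousLinearMap.adjoint (orthProjCl S) = orthProjCl S := by
  haveI : CompleteSpace S.topologicalClosure := S.isClosed_topologicalClosure.completeSpace_coe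
  exact (isSelfAdjoint_starProjection S.topologicalClosure).adjoint_eq

end AuxProj

section AuxModel

open ContinuousLinearMap

variable {ι : Type*} [LinearOrder ι]
  {H : Type*} [NormedAddCommGroup H] [InnerProductSpace ℂ H] [CompleteSpace H]
  {E : ι → Type*} [∀ r, NormedAddCommGroup (E r)] [∀ r, InnerProductSpace ℂ (E r)]
  [∀ r, CompleteSpace (E r)]
  (W : ∀ r, E r →L[ℂ] H)

lemma mem_MW {a b r : ι} (hr : r ∈ Set.Icc b a) (ξ : E r) :
    W r ξ ∈ (⨆ s ∈ Set.Icc b a, LinearMap.range (W s).toLinearMap : Submodule ℂ H) :=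
  le_iSup₂ (f := fun s (_ : s ∈ Set.Icc b a) => LinearMap.range (W s).toLinearMap) r hr ⟨ξ, rfl⟩

lemma vanish_on {a b : ι} (g : H →L[ℂ] H)
    (hg : ∀ r ∈ Set.Icc b a, g ∘L W r = 0) :
    g ∘L orthProjCl (⨆ r ∈ Set.Icc b a, LinearMap.range (W r).toLinearMap) = 0 := by
  have hker : (⨆ r ∈ Set.Icc b a, LinearMap.range (W r).toLinearMap : Submodule ℂ H) ≤ LinearMap.ker g.toLinearMap := by
    refine iSup₂_le fun r hr => ?_
    rintro x ⟨ξ, rfl⟩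
    have h := congrArg (fun (f : E r →L[ℂ] H) => f ξ) (hg r hr)
    simpa using h
  have hcl := Submodule.topologicalClosure_minimal _ hker (ContinuousLinearMap.isClosed_ker g)
  ext x
  simp only [comp_apply, zero_apply]
  exact hcl (orthProjCl_apply_mem _ x)

lemma mem_ortho {a b : ι} {v : H} (hv : ∀ r ∈ Set.Icc b a, adjoint (W r) v = 0) :
    v ∈ ((⨆ r ∈ Set.Icc b a, LinearMap.range (W r).toLinearMap : Submodule ℂ H).topologicalClosure)ᗮ := by
  have hker : (⨆ r ∈ Set.Icc b a, LinearMap.range (W r).toLinearMap : Submodule ℂ H)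
      ≤ LinearMap.ker (innerSL ℂ v).toLinearMap := by
    refine iSup₂_le fun r hr => ?_
    rintro x ⟨ξ, rfl⟩
    have h : (inner ℂ v (W r ξ) : ℂ) = 0 := by
      rw [← ContinuousLinearMap.adjoint_inner_left, hv r hr, inner_zero_left]
    simpa [LinearMap.mem_ker] using h
  have hcl := Submodule.topologicalClosure_minimal _ hker (ContinuousLinearMap.isClosed_ker _)
  rw [Submodule.mem_orthogonal']
  intro u hu
  simpa using hcl hu

lemma proj_fix {a b r : ι} (hr : r ∈ Set.Icc b a) :
    orthProjCl (⨆ s ∈ Set.Icc b a, LinearMap.range (W s).toLinearMap) ∘L W r = W r := by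
  ext ξ
  simp only [comp_apply]
  exact orthProjCl_fix (Submodule.le_topologicalClosure _ (mem_MW W hr ξ))

lemma proj_fix' {a b r : ι} (hr : r ∈ Set.Icc b a) :
    adjoint (W r) ∘L orthProjCl (⨆ s ∈ Set.Icc b a, LinearMap.range (W s).toLinearMap) = adjoint (W r) := by
  have h := congrArg ContinuousLinearMap.adjoint (proj_fix W hr)
  rwa [ContinuousLinearMap.adjoint_comp, orthProjCl_adjoint] at h

lemma proj_catch {a b g t : ι} (hg : g ∈ Set.Icc b a)
    (hrel : ∀ s ∈ Set.Icc b a,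
      adjoint (W s) ∘L W t = (adjoint (W s) ∘L W g) ∘L (adjoint (W g) ∘L W t)) :
    orthProjCl (⨆ r ∈ Set.Icc b a, LinearMap.range (W r).toLinearMap) ∘L W t
      = (W g ∘L adjoint (W g)) ∘L W t := by
  ext ξ
  simp only [comp_apply]
  refine orthProjCl_eq_of (Submodule.le_topologicalClosure _ (mem_MW W hg _)) ?_
  refine mem_ortho W fun s hs => ?_
  have h := congrArg (fun (f : E t →L[ℂ] E s) => f ξ) (hrel s hs)
  simp only [comp_apply] at h
  rw [map_sub, h, sub_self]

end AuxModel

/-- Main auxiliary lemma: the triple product vanishes for any `c ≤ b ≤ a`. -/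
theorem key_triple
    {ι : Type*} [LinearOrder ι]
    {H : Type*} [NormedAddCommGroup H] [InnerProductSpace ℂ H] [CompleteSpace H]
    {E : ι → Type*} [∀ r, NormedAddCommGroup (E r)] [∀ r, InnerProductSpace ℂ (E r)]
    [∀ r, CompleteSpace (E r)]
    (W : ∀ r, E r →L[ℂ] H) (pPlus pMinus : ∀ r, E r →L[ℂ] E r)
    (hiso : ∀ r, ∀ x, ‖W r x‖ = ‖x‖)
    (hsum : ∀ r, pPlus r + pMinus r = 1)
    (hidemP : ∀ r, pPlus r ∘L pPlus r = pPlus r)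
    (hidemM : ∀ r, pMinus r ∘L pMinus r = pMinus r)
    (hana : ∀ i j, j ≤ i → pMinus i ∘L (adjoint (W i) ∘L W j) ∘L pPlus j = 0)
    (hmod : ∀ i j k, k ≤ j → j ≤ i →
      adjoint (W i) ∘L W k = (adjoint (W i) ∘L W j) ∘L (adjoint (W j) ∘L W k))
    (a b c : ι) (hcb : c ≤ b) (hba : b ≤ a) :
    Pmodel W pPlus pMinus b c ∘L Pmodel W pPlus pMinus a c ∘L Pmodel W pPlus pMinus a b = 0 := by
  -- notation
  have hinner : ∀ r (x y : E r), (inner ℂ (W r x) (W r y) : ℂ) = inner ℂ x y :=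
    fun r => (LinearMap.norm_map_iff_inner_map_map (𝕜 := ℂ) (W r)).1 (hiso r)
  have hWW : ∀ r, adjoint (W r) ∘L W r = 1 := by
    intro r
    ext x
    refine ext_inner_right ℂ fun y => ?_
    simp only [comp_apply, ContinuousLinearMap.one_apply]
    rw [ContinuousLinearMap.adjoint_inner_left]
    exact hinner r x y
  -- abbreviations
  set P1 := orthProjCl (⨆ r ∈ Set.Icc c b, LinearMap.range (W r).toLinearMap) with hP1
  set P2 := orthProjCl (⨆ r ∈ Set.Icc c a, LinearMap.range (W r).toLinearMap) with hP2
  set P3 := orthProjCl (⨆ r ∈ Set.Icc b a, LinearMap.range (W r).toLinearMap) with hP3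
  set ql := qmap W pPlus c with hql
  set sk := qmap W pPlus b with hsk
  set rk := qmap W pMinus b with hrk
  set ri := qmap W pMinus a with hri
  -- generic composition identities
  have qmul : ∀ (p q : ∀ r, E r →L[ℂ] E r) (x y : ι),
      qmap W p x ∘L qmap W q y
        = W x ∘L ((p x ∘L (adjoint (W x) ∘L W y) ∘L q y) ∘L adjoint (W y)) := by
    intro p q x y
    simp only [qmap, comp_assoc]
  have hqmk : ∀ (p q : ∀ r, E r →L[ℂ] E r) (r : ι),
      qmap W p r ∘L qmap W q r = W r ∘L ((p r ∘L q r) ∘L adjoint (W r)) := by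
    intro p q r
    rw [qmul, hWW r]
    simp only [comp_assoc, one_def, ContinuousLinearMap.comp_id, ContinuousLinearMap.id_comp]
  have hPq : ∀ (T : H →L[ℂ] H) (p : ∀ r, E r →L[ℂ] E r) (r : ι),
      T ∘L W r = W r → T ∘L qmap W p r = qmap W p r := by
    intro T p r h
    simp only [qmap, ← comp_assoc]
    rw [h]
  have hqP : ∀ (T : H →L[ℂ] H) (p : ∀ r, E r →L[ℂ] E r) (r : ι),
      adjoint (W r) ∘L T = adjoint (W r) → qmap W p r ∘L T = qmap W p r := by
    intro T p r h
    simp only [qmap, comp_assoc]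
    rw [h]
  -- the ring relations
  have h1 : ri * P3 = ri := hqP P3 pMinus a (proj_fix' W ⟨hba, le_refl a⟩)
  have h13 : rk * P3 = rk := hqP P3 pMinus b (proj_fix' W ⟨le_refl b, hba⟩)
  have h3 : ri * ri = ri := by
    show ri ∘L ri = ri
    rw [hri, hqmk, hidemM a]
    simp only [qmap, comp_assoc]
  have h4 : sk * sk = sk := by
    show sk ∘L sk = sk
    rw [hsk, hqmk, hidemP b]
    simp only [qmap, comp_assoc]
  have h5 : ql * ql = ql := by
    show ql ∘L ql = ql
    rw [hql, hqmk, hidemP c]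
    simp only [qmap, comp_assoc]
  have h6 : ri * sk = 0 := by
    show ri ∘L sk = 0
    rw [hri, hsk, qmul, hana a b hba]
    simp only [zero_comp, comp_zero]
  have h7 : rk * ql = 0 := by
    show rk ∘L ql = 0
    rw [hrk, hql, qmul, hana b c hcb]
    simp only [zero_comp, comp_zero]
  have h9 : P2 * P3 = P3 := by
    show P2 ∘L P3 = P3
    have h0 : (P2 - 1) ∘L P3 = 0 := by
      rw [hP3]
      refine vanish_on W _ fun r hr => ?_
      rw [sub_comp, ContinuousLinearMap.one_def, ContinuousLinearMap.id_comp, hP2, proj_fix W ⟨hcb.trans hr.1, hr.2⟩, sub_self]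
    rwa [sub_comp, ContinuousLinearMap.one_def, ContinuousLinearMap.id_comp, sub_eq_zero] at h0
  have h10 : P2 * ql = ql := hPq P2 pPlus c (proj_fix W ⟨le_refl c, hcb.trans hba⟩)
  have h11 : P1 * ql = ql := hPq P1 pPlus c (proj_fix W ⟨le_refl c, hcb⟩)
  have h12 : P1 * rk = rk := hPq P1 pMinus b (proj_fix W ⟨hcb, le_refl b⟩)
  -- Ek = sk + rk
  have h_Ek : sk + rk = W b ∘L adjoint (W b) := by
    rw [hsk, hrk]
    show (W b ∘L pPlus b) ∘L adjoint (W b) + (W b ∘L pMinus b) ∘L adjoint (W b)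
        = W b ∘L adjoint (W b)
    rw [← add_comp, ← comp_add, hsum b, ContinuousLinearMap.one_def, ContinuousLinearMap.comp_id]
  have hWbP3 : adjoint (W b) ∘L P3 = adjoint (W b) := proj_fix' W ⟨le_refl b, hba⟩
  have h14 : P1 * P3 = sk + rk := by
    show P1 ∘L P3 = sk + rk
    have hcatch1 : ∀ r ∈ Set.Icc b a, P1 ∘L W r = (W b ∘L adjoint (W b)) ∘L W r := by
      intro r hr
      rw [hP1]
      refine proj_catch W ⟨hcb, le_refl b⟩ fun s hs => ?_
      have h := congrArg ContinuousLinearMap.adjoint (hmod r b s hs.2 hr.1)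
      simpa only [ContinuousLinearMap.adjoint_comp, ContinuousLinearMap.adjoint_adjoint] using h
    have h0 : (P1 - W b ∘L adjoint (W b)) ∘L P3 = 0 := by
      rw [hP3]
      refine vanish_on W _ fun r hr => ?_
      rw [sub_comp, hcatch1 r hr, sub_self]
    rw [sub_comp, sub_eq_zero] at h0
    rw [h0, comp_assoc, hWbP3, h_Ek]
  have h8 : ql * P3 = ql * sk + ql * rk := by
    have hPc : P3 ∘L W c = (W b ∘L adjoint (W b)) ∘L W c := by
      rw [hP3]
      exact proj_catch W ⟨le_refl b, hba⟩ fun s hs => hmod s b c hcb hs.1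
    have hc' : adjoint (W c) ∘L P3 = adjoint (W c) ∘L (W b ∘L adjoint (W b)) := by
      have h := congrArg ContinuousLinearMap.adjoint hPc
      rw [ContinuousLinearMap.adjoint_comp, ContinuousLinearMap.adjoint_comp,
        ContinuousLinearMap.adjoint_comp, ContinuousLinearMap.adjoint_adjoint] at h
      rw [hP3, orthProjCl_adjoint] at h
      rw [hP3]
      exact h
    have hql3 : ql ∘L P3 = ql ∘L (W b ∘L adjoint (W b)) := by
      rw [hql]
      simp only [qmap, comp_assoc]
      rw [hc']
    calc ql * P3 = ql ∘L (W b ∘L adjoint (W b)) := hql3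
      _ = ql ∘L (sk + rk) := by rw [h_Ek]
      _ = ql * sk + ql * rk := by rw [ContinuousLinearMap.comp_add]; rfl
  have main := ringkey' P1 P2 P3 ql rk sk ri h1 h3 h4 h5 h6 h7 h8 h9 h10 h11 h12 h13 h14
  show Pmodel W pPlus pMinus b c ∘L Pmodel W pPlus pMinus a c ∘L Pmodel W pPlus pMinus a b = 0
  simp only [Pmodel, ← hP1, ← hP2, ← hP3, ← hql, ← hsk, ← hrk, ← hri]
  simp only [← ContinuousLinearMap.mul_def]
  simp only [mul_assoc] at main ⊢
  exact main

/-- In a 4-model (indices `l ≤ k ≤ j ≤ i` standing for `1 ≤ 2 ≤ 3 ≤ 4`),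
the composed corrections vanish: `P_{(21)}P_{(41)}P_{(42)} = 0`,
`P_{(21)}P_{(31)}P_{(32)} = 0` and `P_{(32)}P_{(42)}P_{(43)} = 0`. -/
theorem model_associativity_defect
    {ι : Type*} [LinearOrder ι]
    {H : Type*} [NormedAddCommGroup H] [InnerProductSpace ℂ H] [CompleteSpace H]
    {E : ι → Type*} [∀ r, NormedAddCommGroup (E r)] [∀ r, InnerProductSpace ℂ (E r)]
    [∀ r, CompleteSpace (E r)]
    (W : ∀ r, E r →L[ℂ] H) (pPlus pMinus : ∀ r, E r →L[ℂ] E r)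
    (hiso : ∀ r, ∀ x, ‖W r x‖ = ‖x‖)
    (hsum : ∀ r, pPlus r + pMinus r = 1)
    (hidemP : ∀ r, pPlus r ∘L pPlus r = pPlus r)
    (hidemM : ∀ r, pMinus r ∘L pMinus r = pMinus r)
    (hana : ∀ i j, j ≤ i → pMinus i ∘L (adjoint (W i) ∘L W j) ∘L pPlus j = 0)
    (hmod : ∀ i j k, k ≤ j → j ≤ i →
      adjoint (W i) ∘L W k = (adjoint (W i) ∘L W j) ∘L (adjoint (W j) ∘L W k))
    (i j k l : ι) (hji : j ≤ i) (hkj : k ≤ j) (hlk : l ≤ k) :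
    Pmodel W pPlus pMinus k l ∘L Pmodel W pPlus pMinus i l ∘L Pmodel W pPlus pMinus i k = 0
      ∧ Pmodel W pPlus pMinus k l ∘L Pmodel W pPlus pMinus j l ∘L
          Pmodel W pPlus pMinus j k = 0
      ∧ Pmodel W pPlus pMinus j k ∘L Pmodel W pPlus pMinus i k ∘L
          Pmodel W pPlus pMinus i j = 0 :=
  ⟨key_triple W pPlus pMinus hiso hsum hidemP hidemM hana hmod i k l hlk (hkj.trans hji),
   key_triple W pPlus pMinus hiso hsum hidemP hidemM hana hmod j k l hlk hkj,
   key_triple W pPlus pMinus hiso hsum hidemP hidemM hana hmod i j k hkj hji⟩
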